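/- arXiv:2007.10924 — 2 statements merged into one kernel-verified Lean document; each statement's English description precedes it below -/
import Mathlib

section
/- If a non-constant n-bit partial Boolean function f : D → {0,1} can be computed exactly by a quantum 1-query algorithm, then there exists a degree-1 SOS complex representation matrix of f and its negation. -/
open scoped BigOperators

noncomputable section

/-- The quantum oracle `O_x`, as a diagonal matrix acting on `ℂ^{(n+1)m}`, whose basis
vectors are indexed by pairs `(i, j)` with `i ∈ {0, 1, …, n}` (encoded as `Option (Fin n)`,
`none` playing the role of `0`) and `j ∈ {1, …, m}`. -/
def oracleMat (n m : ℕ) (x : Fin n → Bool) :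
    Matrix (Option (Fin n) × Fin m) (Option (Fin n) × Fin m) ℂ :=
  Matrix.diagonal fun p =>
    match p.1 with
    | none => 1
    | some i => if x i then -1 else 1

/-- Squared Euclidean norm of a complex vector. -/
def vecNormSq {ι : Type*} [Fintype ι] (v : ι → ℂ) : ℝ :=
  ∑ i, Complex.normSq (v i)

/-- The partial Boolean function `f` with domain (promised set) `D` is computed exactly by a
quantum 1-query algorithm: there are `m ≥ 1`, a unit vector `ψ`, unitaries `U₀, U₁` and an
orthogonal projection `P` with `‖P U₁ O_x U₀ ψ‖² = f x` for all `x ∈ D`. -/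
def ComputedExactly1 {n : ℕ} (D : Set (Fin n → Bool)) (f : (Fin n → Bool) → Bool) : Prop :=
  ∃ m : ℕ, 1 ≤ m ∧
    ∃ ψ : Option (Fin n) × Fin m → ℂ, vecNormSq ψ = 1 ∧
      ∃ U₀ U₁ P : Matrix (Option (Fin n) × Fin m) (Option (Fin n) × Fin m) ℂ,
        U₀ ∈ Matrix.unitaryGroup (Option (Fin n) × Fin m) ℂ ∧
        U₁ ∈ Matrix.unitaryGroup (Option (Fin n) × Fin m) ℂ ∧
        P.IsHermitian ∧ P * P = P ∧
        ∀ x ∈ D, vecNormSq ((P * U₁ * oracleMat n m x * U₀).mulVec ψ) = if f x then 1 else 0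

/-- A multilinear polynomial: degree at most 1 in each variable. -/
def IsMultilinear {n : ℕ} (p : MvPolynomial (Fin n) ℝ) : Prop :=
  ∀ i, p.degreeOf i ≤ 1

/-- `p` represents the partial Boolean function `f` on the promised set `D`. -/
def Represents {n : ℕ} (p : MvPolynomial (Fin n) ℝ)
    (D : Set (Fin n → Bool)) (f : (Fin n → Bool) → Bool) : Prop :=
  ∀ x ∈ D, MvPolynomial.eval (fun i => if x i then (1 : ℝ) else 0) p = if f x then 1 else 0

/-- `f` (with domain `D`) depends on `k` bits: `k` is the minimum, over all multilinear
polynomials representing `f`, of the number of variables occurring. -/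
def DependsOnBits {n : ℕ} (D : Set (Fin n → Bool)) (f : (Fin n → Bool) → Bool) (k : ℕ) : Prop :=
  IsLeast {c | ∃ p : MvPolynomial (Fin n) ℝ,
    IsMultilinear p ∧ Represents p D f ∧ p.vars.card = c} k

/-- The Fourier basis vector `|F(x)⟩₁ = (1, (−1)^{x_1}, …, (−1)^{x_n})`. -/
def fourierVec {n : ℕ} (x : Fin n → Bool) : Option (Fin n) → ℂ :=
  fun o => match o with
  | none => 1
  | some i => if x i then -1 else 1

/-- The polynomial basis vector `(1, x₁, …, xₙ)`. -/
def polyVec {n : ℕ} (x : Fin n → Bool) : Option (Fin n) → ℝ :=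
  fun o => match o with
  | none => 1
  | some i => if x i then 1 else 0

/-- A degree-1 SOS complex representation matrix of `f` and its negation, given by the
rows `α l` (`l < p` for `f`, `p ≤ l < p + q` for the negation of `f`). -/
def SOSRep {n : ℕ} (D : Set (Fin n → Bool)) (f : (Fin n → Bool) → Bool)
    (p q : ℕ) (α : Fin (p + q) → Option (Fin n) → ℂ) : Prop :=
  (∀ x ∈ D, ∑ l : Fin p,
      Complex.normSq (∑ i, (starRingEnd ℂ) (α (Fin.castAdd q l) i) * fourierVec x i)
      = if f x then 1 else 0) ∧
  (∀ x ∈ D, ∑ l : Fin q,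
      Complex.normSq (∑ i, (starRingEnd ℂ) (α (Fin.natAdd p l) i) * fourierVec x i)
      = if f x then 0 else 1) ∧
  (∀ x : Fin n → Bool, ∑ l : Fin (p + q),
      Complex.normSq (∑ i, (starRingEnd ℂ) (α l i) * fourierVec x i) = 1)

/-- `rank(G_f(1,b))`: the dimension of the real span of the vectors `(1, x₁, …, xₙ)`
over all `x ∈ D` with `f x = b`. -/
def rankG {n : ℕ} (D : Set (Fin n → Bool)) (f : (Fin n → Bool) → Bool) (b : Bool) : ℕ :=
  Module.finrank ℝ (Submodule.span ℝ (polyVec '' {x ∈ D | f x = b}))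

end

/-!
Write `v = U₀ ψ`. Since `O_x` multiplies the coordinate `(i, j)` by `F(x)ᵢ`, every amplitude
of `M O_x v` is a linear form in `F(x)`, namely `∑ᵢ (∑ⱼ M_{k,(i,j)} v_{(i,j)}) F(x)ᵢ`. The
amplitudes of `P U₁ O_x v` give the rows for `f`, those of `(1 - P) U₁ O_x v` the rows for its
negation: the first sum of squares is `f x` on `D`, and both together add up to
`‖U₁ O_x U₀ ψ‖² = 1` for every `x`, because `U₀`, `O_x`, `U₁` are unitary and `P` is an
orthogonal projection.
-/

open Matrix

section VecNormSq

variable {K : Type*} [Fintype K]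

lemma ofReal_vecNormSq (u : K → ℂ) : (vecNormSq u : ℂ) = star u ⬝ᵥ u := by
  simp only [vecNormSq, dotProduct, Pi.star_apply, Complex.ofReal_sum,
    Complex.normSq_eq_conj_mul_self]
  rfl

lemma ofReal_vecNormSq_mulVec (M : Matrix K K ℂ) (u : K → ℂ) :
    (vecNormSq (M *ᵥ u) : ℂ) = star u ᵥ* (Mᴴ * M) ⬝ᵥ u := by
  rw [ofReal_vecNormSq, star_mulVec, dotProduct_mulVec, vecMul_vecMul]

variable [DecidableEq K]

lemma vecNormSq_unitary_mulVec {U : Matrix K K ℂ} (hU : U ∈ unitaryGroup K ℂ) (u : K → ℂ) :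
    vecNormSq (U *ᵥ u) = vecNormSq u := by
  have hUU : Uᴴ * U = 1 := hU.1
  have : (vecNormSq (U *ᵥ u) : ℂ) = vecNormSq u := by
    rw [ofReal_vecNormSq_mulVec, hUU, vecMul_one, ofReal_vecNormSq]
  exact_mod_cast this

lemma vecNormSq_proj_add_compl {P : Matrix K K ℂ} (hP : P.IsHermitian) (hPP : P * P = P)
    (u : K → ℂ) : vecNormSq (P *ᵥ u) + vecNormSq ((1 - P) *ᵥ u) = vecNormSq u := by
  have hP' : Pᴴ * P = P := by rw [hP.eq, hPP]
  have hQ' : (1 - P)ᴴ * (1 - P) = 1 - P := by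
    rw [conjTranspose_sub, conjTranspose_one, hP.eq, sub_mul, mul_sub, mul_sub, hPP, one_mul,
      mul_one, one_mul, sub_self, sub_zero]
  have : (vecNormSq (P *ᵥ u) : ℂ) + vecNormSq ((1 - P) *ᵥ u) = vecNormSq u := by
    rw [ofReal_vecNormSq_mulVec, ofReal_vecNormSq_mulVec, hP', hQ', ← add_dotProduct,
      ← vecMul_add, add_sub_cancel, vecMul_one, ofReal_vecNormSq]
  exact_mod_cast this

end VecNormSq

section Oracle

variable {n m : ℕ}

lemma oracleMat_mulVec_apply (x : Fin n → Bool) (v : Option (Fin n) × Fin m → ℂ)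
    (k : Option (Fin n) × Fin m) :
    (oracleMat n m x *ᵥ v) k = fourierVec x k.1 * v k := by
  rcases k with ⟨_ | i, j⟩ <;> simp [oracleMat, mulVec_diagonal, fourierVec]

lemma oracleMat_mem_unitaryGroup (x : Fin n → Bool) :
    oracleMat n m x ∈ unitaryGroup (Option (Fin n) × Fin m) ℂ := by
  rw [mem_unitaryGroup_iff, star_eq_conjTranspose, oracleMat, diagonal_conjTranspose,
    diagonal_mul_diagonal, ← diagonal_one]
  congr 1
  funext ⟨i, j⟩
  rcases i with _ | i
  · simp
  · by_cases hx : x i <;> simp [hx]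

end Oracle

section SOS

variable {n : ℕ}

def sosSum {p : ℕ} (a : Fin p → Option (Fin n) → ℂ) (x : Fin n → Bool) : ℝ :=
  ∑ l, Complex.normSq (∑ i, (starRingEnd ℂ) (a l i) * fourierVec x i)

lemma sosRep_append {D : Set (Fin n → Bool)} {f : (Fin n → Bool) → Bool} {p q : ℕ}
    {a : Fin p → Option (Fin n) → ℂ} {b : Fin q → Option (Fin n) → ℂ}
    (ha : ∀ x ∈ D, sosSum a x = if f x then 1 else 0)
    (hab : ∀ x, sosSum a x + sosSum b x = 1) :
    SOSRep D f p q (Fin.append a b) := by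
  simp only [SOSRep, Fin.append_left, Fin.append_right, Fin.sum_univ_add]
  refine ⟨ha, fun x hx => ?_, hab⟩
  have hx' := hab x
  rw [ha x hx] at hx'
  change sosSum b x = _
  split_ifs at hx' ⊢ <;> linarith

end SOS

section Query

variable {n m : ℕ}

lemma mulVec_oracleMat_mulVec_apply
    (M : Matrix (Option (Fin n) × Fin m) (Option (Fin n) × Fin m) ℂ)
    (v : Option (Fin n) × Fin m → ℂ) (x : Fin n → Bool) (k : Option (Fin n) × Fin m) :
    (M *ᵥ (oracleMat n m x *ᵥ v)) k = ∑ i, (∑ j, M k (i, j) * v (i, j)) * fourierVec x i := by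
  rw [show oracleMat n m x *ᵥ v = fun k => fourierVec x k.1 * v k from
    funext (oracleMat_mulVec_apply x v)]
  simp only [mulVec, dotProduct, Fintype.sum_prod_type, Finset.sum_mul]
  exact Finset.sum_congr rfl fun i _ => Finset.sum_congr rfl fun j _ => by ring

def queryRows {N : ℕ} (e : Fin N ≃ Option (Fin n) × Fin m)
    (M : Matrix (Option (Fin n) × Fin m) (Option (Fin n) × Fin m) ℂ)
    (v : Option (Fin n) × Fin m → ℂ) : Fin N → Option (Fin n) → ℂ :=
  fun l i => star (∑ j, M (e l) (i, j) * v (i, j))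

lemma sosSum_queryRows {N : ℕ} (e : Fin N ≃ Option (Fin n) × Fin m)
    (M : Matrix (Option (Fin n) × Fin m) (Option (Fin n) × Fin m) ℂ)
    (v : Option (Fin n) × Fin m → ℂ) (x : Fin n → Bool) :
    sosSum (queryRows e M v) x = vecNormSq (M *ᵥ (oracleMat n m x *ᵥ v)) := by
  simp only [sosSum, queryRows, vecNormSq, mulVec_oracleMat_mulVec_apply]
  simp only [RCLike.star_def, starRingEnd_self_apply]
  exact e.sum_comp fun k => Complex.normSq (∑ i, (∑ j, M k (i, j) * v (i, j)) * fourierVec x i)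

end Query

theorem stmt_6_general (n : ℕ) (D : Set (Fin n → Bool)) (f : (Fin n → Bool) → Bool)
    (h : ComputedExactly1 D f) :
    ∃ p q : ℕ, 1 ≤ p ∧ 1 ≤ q ∧ ∃ α : Fin (p + q) → Option (Fin n) → ℂ,
      SOSRep D f p q α := by
  obtain ⟨m, hm, ψ, hψ, U₀, U₁, P, hU₀, hU₁, hP, hPP, hf⟩ := h
  let e := (Fintype.equivFin (Option (Fin n) × Fin m)).symm
  have hN : 1 ≤ Fintype.card (Option (Fin n) × Fin m) :=
    Fintype.card_pos_iff.mpr ⟨(none, ⟨0, hm⟩)⟩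
  refine ⟨_, _, hN, hN, _, sosRep_append (a := queryRows e (P * U₁) (U₀ *ᵥ ψ))
    (b := queryRows e ((1 - P) * U₁) (U₀ *ᵥ ψ)) (fun x hx => ?_) (fun x => ?_)⟩
  · rw [sosSum_queryRows, mulVec_mulVec, mulVec_mulVec]
    exact hf x hx
  · rw [sosSum_queryRows, sosSum_queryRows, ← mulVec_mulVec, ← mulVec_mulVec,
      vecNormSq_proj_add_compl hP hPP, vecNormSq_unitary_mulVec hU₁,
      vecNormSq_unitary_mulVec (oracleMat_mem_unitaryGroup x), vecNormSq_unitary_mulVec hU₀, hψ]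

theorem stmt_6 (n : ℕ) (D : Set (Fin n → Bool)) (f : (Fin n → Bool) → Bool)
    (hnc : (∃ x ∈ D, f x = false) ∧ (∃ y ∈ D, f y = true))
    (h : ComputedExactly1 D f) :
    ∃ p q : ℕ, 1 ≤ p ∧ 1 ≤ q ∧ ∃ α : Fin (p + q) → Option (Fin n) → ℂ,
      SOSRep D f p q α :=
  stmt_6_general n D f h
end

section
/- For n ≥ 2 and 1 ≤ r ≤ n+1, the number of nonempty subsets E ⊆ {0,1}^n such that the real linear span of {(1, x) : x ∈ E} ⊆ ℝ^{n+1} has dimension exactly r is at most C(2^n, r)·2^{2^{r−1} − r}, where C(·,·) denotes the binomial coefficient. -/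
open scoped BigOperators

/-!
Choose `B ⊆ E` of `r` points whose vectors `(1, x)` form a basis of `span {(1, x) | x ∈ E}`.
Then `B ⊆ E ⊆ S(B)`, where `S(B)` consists of the cube points `x` with `(1, x)` in the span of
`B`; this leaves at most `C(2^n, r)` choices of `B` and `2^(|S(B)| - r)` of `E` for each `B`.
Finally `|S(B)| ≤ 2^(r-1)`: the coordinate functionals span the dual of an `r`-dimensional
subspace `V`, so some `r` coordinates, among them the constant one, determine every vector of
`V`, and a cube point with `(1, x) ∈ V` is determined by the remaining `r - 1` bits.
-/

open Module Submodule

theorem Submodule.exists_determining_coordinates {K ι : Type*} [Field K] [Finite ι]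
    (V : Submodule K (ι → K)) {s : Set ι}
    (hs : LinearIndepOn K (fun i => LinearMap.proj i ∘ₗ V.subtype : ι → Dual K V) s) :
    ∃ J : Set ι, s ⊆ J ∧ J.ncard ≤ finrank K V ∧
      ∀ v ∈ V, (∀ j ∈ J, v j = 0) → v = 0 := by
  set ev : ι → Dual K V := fun i => LinearMap.proj i ∘ₗ V.subtype
  obtain ⟨J, -, hsJ, hspan, hli⟩ := exists_linearIndepOn_extension hs (Set.subset_univ s)
  refine ⟨J, hsJ, ?_, fun v hv hJ => funext fun i => ?_⟩
  · have := Fintype.ofFinite J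
    rw [Set.ncard_eq_toFinset_card', Set.toFinset_card, ← Subspace.dual_finrank_eq]
    exact hli.linearIndependent.fintype_card_le_finrank
  · have hker : span K (ev '' J) ≤ LinearMap.ker (Dual.eval K V ⟨v, hv⟩) :=
      span_le.mpr <| Set.image_subset_iff.mpr fun j hj => hJ j hj
    exact hker (hspan ⟨i, Set.mem_univ i, rfl⟩)

theorem polyVec_injective {n : ℕ} : Function.Injective (polyVec (n := n)) := by
  intro x y h
  funext i
  have := congrFun h (some i)
  cases hx : x i <;> cases hy : y i <;> simp_all [polyVec]

theorem ncard_setOf_polyVec_mem_le {n : ℕ} (V : Submodule ℝ (Option (Fin n) → ℝ)) :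
    {x : Fin n → Bool | polyVec x ∈ V}.ncard ≤ 2 ^ (finrank ℝ V - 1) := by
  obtain hempty | ⟨x₀, hx₀⟩ :=
    Set.eq_empty_or_nonempty {x : Fin n → Bool | polyVec x ∈ V}
  · simp [hempty]
  have hnone :
      LinearIndepOn ℝ (fun i => LinearMap.proj i ∘ₗ V.subtype : _ → Dual ℝ V) {none} :=
    LinearIndepOn.singleton fun h => by
      simpa [polyVec] using LinearMap.congr_fun h ⟨polyVec x₀, hx₀⟩
  obtain ⟨J, hnoneJ, hJcard, hJ⟩ := V.exists_determining_coordinates hnone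
  set T : Set (Fin n) := {i | some i ∈ J}
  have hinj : Set.InjOn (fun x (i : T) => x i) {x : Fin n → Bool | polyVec x ∈ V} := by
    intro x hx y hy hxy
    refine polyVec_injective (sub_eq_zero.mp (hJ _ (sub_mem hx hy) fun j hj => ?_))
    cases j with
    | none => simp [polyVec]
    | some i => simp [polyVec, congrFun hxy ⟨i, hj⟩]
  have hTcard : T.ncard ≤ finrank ℝ V - 1 :=
    calc T.ncard = (some '' T).ncard :=
          (Set.ncard_image_of_injective T (Option.some_injective _)).symm
      _ ≤ (J \ {none}).ncard := Set.ncard_le_ncard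
          (by rintro _ ⟨i, hi, rfl⟩; exact ⟨hi, Option.some_ne_none i⟩) (Set.toFinite _)
      _ = J.ncard - 1 := Set.ncard_sdiff_singleton_of_mem (hnoneJ rfl)
      _ ≤ finrank ℝ V - 1 := Nat.sub_le_sub_right hJcard 1
  calc {x : Fin n → Bool | polyVec x ∈ V}.ncard
      ≤ (Set.univ : Set (T → Bool)).ncard :=
        Set.ncard_le_ncard_of_injOn _ (fun _ _ => Set.mem_univ _) hinj Set.finite_univ
    _ = 2 ^ T.ncard := by simp [Set.ncard_univ, Nat.card_fun, Nat.card_coe_set_eq]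
    _ ≤ 2 ^ (finrank ℝ V - 1) := Nat.pow_le_pow_right two_pos hTcard

theorem exists_finset_subset_card_eq_finrank_span {ι K M : Type*} [DivisionRing K]
    [AddCommGroup M] [Module K M] [Finite ι] (v : ι → M) (E : Set ι) :
    ∃ B : Finset ι, ↑B ⊆ E ∧ B.card = finrank K (span K (v '' E)) ∧
      span K (v '' B) = span K (v '' E) := by
  obtain ⟨b, hbE, -, hEb, hli⟩ := exists_linearIndepOn_extension (linearIndepOn_empty K v)
    (Set.empty_subset E)
  have hspan : span K (v '' b) = span K (v '' E) :=
    le_antisymm (span_mono (Set.image_mono hbE)) (span_le.mpr hEb)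
  have := Fintype.ofFinite b
  refine ⟨b.toFinset, by simpa using hbE, ?_, by simpa using hspan⟩
  rw [← hspan, Set.image_eq_range, finrank_span_eq_card hli.linearIndependent, Set.toFinset_card]

noncomputable def cubePointsInSpan {n : ℕ} (B : Finset (Fin n → Bool)) :
    Finset (Fin n → Bool) :=
  (polyVec ⁻¹' span ℝ (polyVec '' (B : Set (Fin n → Bool)))).toFinite.toFinset

theorem mem_cubePointsInSpan {n : ℕ} {B : Finset (Fin n → Bool)} {x : Fin n → Bool} :
    x ∈ cubePointsInSpan B ↔
      polyVec x ∈ span ℝ (polyVec '' (B : Set (Fin n → Bool))) := by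
  simp [cubePointsInSpan]

theorem subset_cubePointsInSpan {n : ℕ} (B : Finset (Fin n → Bool)) :
    B ⊆ cubePointsInSpan B :=
  fun _ hx => mem_cubePointsInSpan.mpr (subset_span (Set.mem_image_of_mem _ hx))

theorem card_cubePointsInSpan_le {n : ℕ} (B : Finset (Fin n → Bool)) :
    (cubePointsInSpan B).card ≤ 2 ^ (B.card - 1) := by
  classical
  have hrank : finrank ℝ (span ℝ (polyVec '' (B : Set (Fin n → Bool)))) ≤ B.card := by
    rw [← Finset.coe_image]
    exact (finrank_span_finset_le_card _).trans Finset.card_image_le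
  rw [cubePointsInSpan, ← Set.ncard_eq_toFinset_card]
  exact (ncard_setOf_polyVec_mem_le _).trans
    (Nat.pow_le_pow_right two_pos (Nat.sub_le_sub_right hrank 1))

theorem card_Icc_cubePointsInSpan_le {n : ℕ} (B : Finset (Fin n → Bool)) :
    (Finset.Icc B (cubePointsInSpan B)).card ≤ 2 ^ (2 ^ (B.card - 1) - B.card) := by
  rw [Finset.card_Icc_finset (subset_cubePointsInSpan B)]
  exact Nat.pow_le_pow_right two_pos (Nat.sub_le_sub_right (card_cubePointsInSpan_le B) _)

theorem stmt_13_general (n r : ℕ) :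
    Set.ncard {E : Set (Fin n → Bool) | E.Nonempty ∧
        Module.finrank ℝ (Submodule.span ℝ (polyVec '' E)) = r}
      ≤ Nat.choose (2 ^ n) r * 2 ^ (2 ^ (r - 1) - r) := by
  classical
  set 𝒯 : Finset (Finset (Fin n → Bool)) :=
    (Finset.univ.powersetCard r).biUnion fun B => Finset.Icc B (cubePointsInSpan B)
  have hcover :
      {E : Set (Fin n → Bool) | E.Nonempty ∧ finrank ℝ (span ℝ (polyVec '' E)) = r} ⊆
        (↑) '' (𝒯 : Set (Finset (Fin n → Bool))) := by
    rintro E ⟨-, hE⟩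
    obtain ⟨B, hBE, hBcard, hBspan⟩ :=
      exists_finset_subset_card_eq_finrank_span (K := ℝ) polyVec E
    refine ⟨E.toFinset, Finset.mem_biUnion.mpr ⟨B, ?_, Finset.mem_Icc.mpr ⟨?_, ?_⟩⟩,
      Set.coe_toFinset E⟩
    · exact Finset.mem_powersetCard.mpr ⟨Finset.subset_univ B, hBcard.trans hE⟩
    · simpa using hBE
    · intro x hx
      rw [mem_cubePointsInSpan, hBspan]
      exact subset_span (Set.mem_image_of_mem _ (Set.mem_toFinset.mp hx))
  calc _ ≤ ((↑) '' (𝒯 : Set (Finset (Fin n → Bool))) : Set (Set (Fin n → Bool))).ncard :=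
        Set.ncard_le_ncard hcover (Set.toFinite _)
    _ = 𝒯.card := by
        rw [Set.ncard_image_of_injective _ Finset.coe_injective, Set.ncard_coe_finset]
    _ ≤ ∑ B ∈ Finset.univ.powersetCard r, (Finset.Icc B (cubePointsInSpan B)).card :=
        Finset.card_biUnion_le
    _ ≤ ∑ _B ∈ Finset.univ.powersetCard r, 2 ^ (2 ^ (r - 1) - r) :=
        Finset.sum_le_sum fun B hB =>
          (Finset.mem_powersetCard.mp hB).2 ▸ card_Icc_cubePointsInSpan_le B
    _ = Nat.choose (2 ^ n) r * 2 ^ (2 ^ (r - 1) - r) := by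
        simp [Finset.card_powersetCard]

theorem stmt_13 (n r : ℕ) (hn : 2 ≤ n) (hr1 : 1 ≤ r) (hr2 : r ≤ n + 1) :
    Set.ncard {E : Set (Fin n → Bool) | E.Nonempty ∧
        Module.finrank ℝ (Submodule.span ℝ (polyVec '' E)) = r}
      ≤ Nat.choose (2 ^ n) r * 2 ^ (2 ^ (r - 1) - r) :=
  stmt_13_general n r
end
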